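/- arXiv:1809.01461 — 6 statements merged into one kernel-verified Lean document; each statement's English description precedes it below -/
import Mathlib

section
/- Let g : [0,∞) → ℝ and f : ℝ × ℝ → ℝ be measurable functions such that t ↦ f(t, g(t)) is locally integrable. Suppose that for all 0 ≤ s ≤ t we have g(t) - g(s) ≤ ∫_s^t f(u, g(u)) du, and that there exists M ∈ ℝ such that f(u, g(u)) ≤ 0 whenever g(u) ≥ M. Then g(t) ≤ max(g(0), M) for all t ≥ 0. -/
open MeasureTheory Set

/-! Write `Φ` for a primitive of `u ↦ f(u, g(u))`, so that `g t - g s ≤ Φ t - Φ s`. Let `s₀` be the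
supremum of the times in `[0, t]` at which `g ≤ K := max (g 0) M`. After `s₀` we have `g > K ≥ M`, so `f ≤ 0`
there and `Φ t ≤ Φ s₀`. Hence `g t ≤ K + Φ s₀ - Φ u` for every time `u` at which `g u ≤ K`, and
since `s₀` is a limit of such times and `Φ` is continuous, `g t ≤ K`. -/

theorem le_of_sub_le_sub_of_continuousOn {g Φ : ℝ → ℝ} {a b K : ℝ} (hab : a ≤ b)
    (hΦ : ContinuousOn Φ (Icc a b)) (hle : ∀ s ∈ Icc a b, g b - g s ≤ Φ b - Φ s)
    (hdrift : ∀ s ∈ Icc a b, (∀ u ∈ Ioc s b, K < g u) → Φ b ≤ Φ s) (ha : g a ≤ K) :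
    g b ≤ K := by
  set S := {u ∈ Icc a b | g u ≤ K}
  have haS : a ∈ S := ⟨⟨le_rfl, hab⟩, ha⟩
  have hSbdd : BddAbove S := ⟨b, fun u hu => hu.1.2⟩
  have hs₀ : sSup S ∈ Icc a b := ⟨le_csSup hSbdd haS, csSup_le ⟨a, haS⟩ fun u hu => hu.1.2⟩
  have hΦs₀ : Φ b ≤ Φ (sSup S) := hdrift _ hs₀ fun u hu => by
    by_contra! hgu
    exact (le_csSup hSbdd ⟨⟨hs₀.1.trans hu.1.le, hu.2⟩, hgu⟩).not_gt hu.1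
  have hmaps : MapsTo Φ S (Iic (Φ (sSup S) + K - g b)) := fun u hu => by
    have := hle u hu.1
    rw [mem_Iic]
    linarith [hu.2]
  have hclosure := ((hΦ _ hs₀).mono (sep_subset _ _)).mem_closure
    (csSup_mem_closure ⟨a, haS⟩ hSbdd) hmaps
  rw [closure_Iic, mem_Iic] at hclosure
  linarith

theorem stmt_0_general (g : ℝ → ℝ) (f : ℝ → ℝ → ℝ) (M : ℝ)
    (hloc : LocallyIntegrableOn (fun u => f u (g u)) (Set.Ici (0 : ℝ)))
    (hineq : ∀ s t : ℝ, 0 ≤ s → s ≤ t → g t - g s ≤ ∫ u in s..t, f u (g u))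
    (hdrift : ∀ u : ℝ, 0 ≤ u → M ≤ g u → f u (g u) ≤ 0) :
    ∀ t : ℝ, 0 ≤ t → g t ≤ max (g 0) M := by
  intro t ht
  have hint : IntegrableOn (fun u => f u (g u)) (uIcc 0 t) := by
    rw [uIcc_of_le ht]
    exact hloc.integrableOn_compact_subset Icc_subset_Ici_self isCompact_Icc
  have hprim : ∀ s ∈ Icc 0 t,
      (∫ u in 0..t, f u (g u)) - ∫ u in 0..s, f u (g u) = ∫ u in s..t, f u (g u) := fun s hs =>
    intervalIntegral.integral_interval_sub_left hint.intervalIntegrable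
      (hint.mono_set (uIcc_subset_uIcc_left (by rwa [uIcc_of_le ht]))).intervalIntegrable
  refine le_of_sub_le_sub_of_continuousOn ht (Φ := fun x => ∫ u in 0..x, f u (g u)) ?_ ?_ ?_
    (le_max_left _ _)
  · simpa only [uIcc_of_le ht] using intervalIntegral.continuousOn_primitive_interval hint
  · intro s hs
    rw [hprim s hs]
    exact hineq s t hs.1 hs.2
  · intro s hs hgt
    rw [← sub_nonpos, hprim s hs, intervalIntegral.integral_of_le hs.2]
    exact setIntegral_nonpos measurableSet_Ioc fun u hu =>
      hdrift u (hs.1.trans hu.1.le) ((le_max_right _ _).trans (hgt u hu).le)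

/-- Gronwall-type comparison lemma: if `g(t) - g(s) ≤ ∫_s^t f(u, g(u)) du` for all
`0 ≤ s ≤ t`, `t ↦ f(t, g(t))` is locally integrable on `[0,∞)`, and `f(u, g(u)) ≤ 0`
whenever `g(u) ≥ M` (for `u ≥ 0`), then `g(t) ≤ max (g 0) M` for all `t ≥ 0`. -/
theorem stmt_0 (g : ℝ → ℝ) (f : ℝ → ℝ → ℝ) (M : ℝ)
    (hg : Measurable g) (hf : Measurable (Function.uncurry f))
    (hloc : LocallyIntegrableOn (fun u => f u (g u)) (Set.Ici (0 : ℝ)))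
    (hineq : ∀ s t : ℝ, 0 ≤ s → s ≤ t → g t - g s ≤ ∫ u in s..t, f u (g u))
    (hdrift : ∀ u : ℝ, 0 ≤ u → M ≤ g u → f u (g u) ≤ 0) :
    ∀ t : ℝ, 0 ≤ t → g t ≤ max (g 0) M :=
  stmt_0_general g f M hloc hineq hdrift
end

section
/- Let M ≥ 0 and K̂ > 0, let 0 < θ < c₁ ≤ 1, and let (x_n)_{n≥1} be a sequence of nonnegative reals with x₁ ≤ K̂ and K̂ ≥ K/c₁ for some K with the following property: for every n ≥ 1, x_{n+1} ≤ x_n + γ_{n+1}(u_{n+1} + K + (θ - c₁) x_n), where 0 < γ_{n+1} ≤ 1/c₁ and the partial sums satisfy |Σ_{k=n}^m γ_{k+1} u_{k+1}| ≤ M for all 1 ≤ n ≤ m. Then x_n ≤ 2M + (1 + c₁ - θ)/(c₁ - θ) · K̂ for all n ≥ 1. -/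
/-! Above the level `T = c₁ K̂ / (c₁ - θ)` the drift `K + (θ - c₁) x` is nonpositive, so while `x`
stays above `T` it grows by at most the perturbations `γ u`. A single step starting at or below `T`
can only overshoot by `γ K ≤ K / c₁ ≤ K̂` plus one perturbation. Hence during any excursion above
`T` the sequence stays below `T + K̂ + M`, and `T + K̂ ≤ (1 + c₁ - θ) / (c₁ - θ) · K̂` since `c₁ ≤ 1`. -/

open Finset

section Excursion

variable {T B M : ℝ} {x d : ℕ → ℝ} {n₀ : ℕ}

theorem le_or_exists_le_add_sum_Ico_of_step (hstart : x n₀ ≤ T)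
    (habove : ∀ n, n₀ ≤ n → T < x n → x (n + 1) ≤ x n + d n)
    (hbelow : ∀ n, n₀ ≤ n → x n ≤ T → x (n + 1) ≤ T + B + d n) :
    ∀ n, n₀ ≤ n → x n ≤ T ∨ ∃ m, n₀ ≤ m ∧ m < n ∧ x n ≤ T + B + ∑ k ∈ Ico m n, d k := by
  intro n hn
  induction n, hn using Nat.le_induction with
  | base => exact Or.inl hstart
  | succ n hn ih =>
    right
    rcases le_or_gt (x n) T with hle | hgt
    · exact ⟨n, hn, n.lt_succ_self, by simpa using hbelow n hn hle⟩
    · obtain ⟨m, hm, hmn, hx⟩ := ih.resolve_left hgt.not_ge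
      refine ⟨m, hm, hmn.trans n.lt_succ_self, ?_⟩
      rw [sum_Ico_succ_top hmn.le]
      linarith [habove n hn hgt]

theorem le_add_add_of_step (hstart : x n₀ ≤ T)
    (habove : ∀ n, n₀ ≤ n → T < x n → x (n + 1) ≤ x n + d n)
    (hbelow : ∀ n, n₀ ≤ n → x n ≤ T → x (n + 1) ≤ T + B + d n)
    (hsum : ∀ m n, n₀ ≤ m → m < n → ∑ k ∈ Ico m n, d k ≤ M) (hBM : 0 ≤ B + M) :
    ∀ n, n₀ ≤ n → x n ≤ T + B + M := by
  intro n hn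
  rcases le_or_exists_le_add_sum_Ico_of_step hstart habove hbelow n hn with hle | ⟨m, hm, hmn, hx⟩
  · linarith
  · linarith [hsum m n hm hmn]

end Excursion

theorem mul_le_of_le_one_div_of_div_le {γ K c B : ℝ} (hγ : 0 ≤ γ) (hγc : γ ≤ 1 / c)
    (hK : K / c ≤ B) (hB : 0 ≤ B) : γ * K ≤ B := by
  rcases le_or_gt 0 K with hK0 | hK0
  · calc γ * K ≤ 1 / c * K := mul_le_mul_of_nonneg_right hγc hK0
      _ = K / c := one_div_mul_eq_div c K
      _ ≤ B := hK
  · nlinarith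

section DriftStep

variable {x y γ u K b : ℝ}

theorem le_add_mul_of_drift_nonpos (hy : y ≤ x + γ * (u + K + b * x)) (hγ : 0 ≤ γ)
    (hdrift : K + b * x ≤ 0) : y ≤ x + γ * u := by
  nlinarith

theorem le_add_add_mul_of_le {T B : ℝ} (hy : y ≤ x + γ * (u + K + b * x)) (hγ : 0 ≤ γ)
    (hb : b ≤ 0) (hx : 0 ≤ x) (hxT : x ≤ T) (hγK : γ * K ≤ B) : y ≤ T + B + γ * u := by
  have hdrift : γ * (b * x) ≤ 0 :=
    mul_nonpos_of_nonneg_of_nonpos hγ (mul_nonpos_of_nonpos_of_nonneg hb hx)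
  linarith

end DriftStep

/-- Deterministic core of the compactness lemma: a recursive inequality with negative
drift, bounded perturbation sums, and bounded step sizes implies a uniform bound. -/
theorem stmt_7 (M Khat K θ c₁ : ℝ) (x γ u : ℕ → ℝ)
    (hM : 0 ≤ M) (hKhat : 0 < Khat) (hθ : 0 < θ) (hθc : θ < c₁) (hc : c₁ ≤ 1)
    (hx1 : x 1 ≤ Khat) (hKK : K / c₁ ≤ Khat)
    (hxpos : ∀ n, 0 ≤ x n)
    (hrec : ∀ n : ℕ, 1 ≤ n →
      x (n + 1) ≤ x n + γ (n + 1) * (u (n + 1) + K + (θ - c₁) * x n))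
    (hγ : ∀ n : ℕ, 1 ≤ n → 0 < γ (n + 1) ∧ γ (n + 1) ≤ 1 / c₁)
    (hsum : ∀ n m : ℕ, 1 ≤ n → n ≤ m →
      |∑ k ∈ Finset.Icc n m, γ (k + 1) * u (k + 1)| ≤ M) :
    ∀ n : ℕ, 1 ≤ n → x n ≤ 2 * M + (1 + c₁ - θ) / (c₁ - θ) * Khat := by
  have hc₁ : 0 < c₁ := hθ.trans hθc
  have hcθ : 0 < c₁ - θ := sub_pos.mpr hθc
  set T := c₁ * Khat / (c₁ - θ) with hT
  have hTmul : (c₁ - θ) * T = c₁ * Khat := mul_div_cancel₀ _ hcθ.ne'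
  have hKT : K ≤ (c₁ - θ) * T := by
    rw [hTmul]; exact (div_le_iff₀' hc₁).mp hKK
  have hKhatT : Khat ≤ T := by
    rw [hT, le_div_iff₀ hcθ]; nlinarith
  have hTbound : T + Khat ≤ (1 + c₁ - θ) / (c₁ - θ) * Khat := by
    rw [hT, div_mul_eq_mul_div, div_add' _ _ _ hcθ.ne', div_le_div_iff_of_pos_right hcθ]
    nlinarith
  have habove : ∀ n, 1 ≤ n → T < x n → x (n + 1) ≤ x n + γ (n + 1) * u (n + 1) :=
    fun n hn hTx ↦ le_add_mul_of_drift_nonpos (hrec n hn) (hγ n hn).1.le (by nlinarith)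
  have hbelow : ∀ n, 1 ≤ n → x n ≤ T → x (n + 1) ≤ T + Khat + γ (n + 1) * u (n + 1) :=
    fun n hn hxT ↦ le_add_add_mul_of_le (hrec n hn) (hγ n hn).1.le (by linarith) (hxpos n) hxT
      (mul_le_of_le_one_div_of_div_le (hγ n hn).1.le (hγ n hn).2 hKK hKhat.le)
  have hsumIco : ∀ m n, 1 ≤ m → m < n → ∑ k ∈ Ico m n, γ (k + 1) * u (k + 1) ≤ M := by
    intro m n hm hmn
    obtain ⟨j, rfl⟩ := Nat.exists_eq_add_of_lt hmn
    rw [Ico_add_one_right_eq_Icc]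
    exact (abs_le.mp (hsum m (m + j) hm (Nat.le_add_right m j))).2
  intro n hn
  linarith [le_add_add_of_step (hx1.trans hKhatT) habove hbelow hsumIco (by linarith) n hn]
end

section
/- Consider the kernel on ℕ given by R_0 = δ_1 and, for x ≥ 1, R_x = (λ/(xμ+λ)) δ_{x+1} + (xμ/(xμ+λ)) δ_{x-1}, where 0 < λ < μ. Let V(x) = e^x. Then there exist θ ∈ (0,1) and K ≥ 0 such that R_x · V ≤ θ V(x) + K for all x ∈ ℕ; explicitly, one can take θ = 2/e and K = sup_{x ≤ λ(e²-2)/μ} R_x · V. -/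
open Real Set

/-!
Writing `R_x · V = e^x (λe² + xμ) / (e (xμ + λ))` for `x ≥ 1`, the bound `R_x · V ≤ (2/e) e^x`
is equivalent to `λ(e² - 2) ≤ xμ`. So the drift inequality holds with `K = 0` for all but the
finitely many `x ≤ λ(e² - 2)/μ`, and taking `K` to be the maximum of `R_x · V` over those
absorbs them.
-/

theorem exp_drift_le {a b : ℝ} (hab : 0 < a + b) (h : a * (exp 1 ^ 2 - 2) ≤ b) (y : ℝ) :
    (a * exp (y + 1) + b * exp (y - 1)) / (b + a) ≤ 2 / exp 1 * exp y := by
  have he := exp_pos 1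
  have hba : 0 < b + a := by linarith
  calc (a * exp (y + 1) + b * exp (y - 1)) / (b + a)
      = exp y / exp 1 * (a * exp 1 ^ 2 + b) / (b + a) := by
        rw [exp_add, exp_sub]; field_simp
    _ ≤ exp y / exp 1 * (2 * (b + a)) / (b + a) := by gcongr; linarith
    _ = 2 / exp 1 * exp y := by field_simp

theorem le_add_sSup_image_of_le_of_notMem {α : Type*} {f g : α → ℝ} {S : Set α}
    (hS : S.Finite) (hg : ∀ x, 0 ≤ g x) (hsup : 0 ≤ sSup (f '' S))
    (hf : ∀ x ∉ S, f x ≤ g x) (x : α) : f x ≤ g x + sSup (f '' S) := by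
  by_cases hx : x ∈ S
  · linarith [hg x, le_csSup (hS.image f).bddAbove (mem_image_of_mem f hx)]
  · linarith [hf x hx]

/-- Lyapunov inequality for the `M/M/∞` embedded chain kernel
`R_0 = δ_1`, `R_x = (λ/(xμ+λ)) δ_{x+1} + (xμ/(xμ+λ)) δ_{x-1}` with `V(x) = e^x`:
there are `θ ∈ (0,1)`, `K ≥ 0` (explicitly `θ = 2/e` and
`K = sup_{x ≤ λ(e²-2)/μ} R_x·V`) with `R_x·V ≤ θ V(x) + K` for all `x`. -/
theorem stmt_9 (lam mu : ℝ) (hlam : 0 < lam) (hlm : lam < mu)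
    (RV : ℕ → ℝ) (hRV0 : RV 0 = Real.exp 1)
    (hRVx : ∀ x : ℕ, 1 ≤ x →
      RV x = (lam * Real.exp ((x : ℝ) + 1) + (x : ℝ) * mu * Real.exp ((x : ℝ) - 1))
        / ((x : ℝ) * mu + lam)) :
    ∃ θ ∈ Set.Ioo (0 : ℝ) 1, ∃ K ≥ (0 : ℝ),
      θ = 2 / Real.exp 1 ∧
      K = sSup (RV '' {x : ℕ | (x : ℝ) ≤ lam * ((Real.exp 1) ^ 2 - 2) / mu}) ∧
      ∀ x : ℕ, RV x ≤ θ * Real.exp (x : ℝ) + K := by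
  have hmu : 0 < mu := hlam.trans hlm
  have he : 2 < exp 1 := exp_one_gt_two
  set S := {x : ℕ | (x : ℝ) ≤ lam * (exp 1 ^ 2 - 2) / mu}
  have hS : S.Finite := (finite_le_nat _).subset fun x (hx : (x : ℝ) ≤ _) => Nat.le_floor hx
  have h0S : 0 ∈ S := by
    have : 2 < exp 1 ^ 2 := by nlinarith
    show ((0 : ℕ) : ℝ) ≤ _
    rw [Nat.cast_zero]
    exact div_nonneg (mul_nonneg hlam.le (by linarith)) hmu.le
  have hK : 0 ≤ sSup (RV '' S) :=
    (exp_pos 1).le.trans (hRV0 ▸ le_csSup (hS.image RV).bddAbove (mem_image_of_mem RV h0S))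
  refine ⟨2 / exp 1, ⟨by positivity, (div_lt_one (exp_pos 1)).2 he⟩, _, hK, rfl, rfl,
    le_add_sSup_image_of_le_of_notMem hS (fun x => by positivity) hK fun x hx => ?_⟩
  have hx1 : 1 ≤ x := Nat.one_le_iff_ne_zero.2 (by rintro rfl; exact hx h0S)
  have hdrift : lam * (exp 1 ^ 2 - 2) ≤ x * mu := by
    simp only [S, mem_ofPred_eq, not_le, div_lt_iff₀ hmu] at hx
    linarith
  rw [hRVx x hx1]
  exact exp_drift_le (by positivity) hdrift x
end

section
/- Consider the birth-death kernel on ℕ given by R_x = λ_x δ_{x+1} + μ_x δ_{x-1} with μ_0 = 0, λ_0 > 0, positive rates, sup_x (λ_x + μ_x) = 1, inf_{x≥1} μ_x > 0, sup_x μ_x < ∞ and λ_x = o(μ_x) as x → ∞. Let c₁ = inf_x (λ_x + μ_x) > 0 and choose a > 0 with e^{-a} ≤ c₁/4, and set V(x) = e^{ax}. Then for all x ∈ ℕ, R_x · V ≤ (c₁/2) V(x) + K, where K = max over the finitely many y with (λ_y/μ_y) e^a + c₁/4 ≥ c₁/2 of V(y)((λ_y/μ_y)e^a + c₁/4) (and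 K = R_0·V for x = 0 handled separately). -/
/-!
For `x ≥ 1`, `R_x · V = V(x) (λ_x e^a + μ_x e^{-a})`. Since `μ_x ≤ 1` we have `λ_x ≤ λ_x / μ_x`,
and `μ_x e^{-a} ≤ e^{-a} ≤ c₁/4`, so `R_x · V ≤ V(x) (λ_x/μ_x · e^a + c₁/4)`. Where the bracket
is below `c₁/2` this is the contraction; elsewhere `λ_x/μ_x ≥ c₁ e^{-a}/4`, which happens only
at finitely many sites because `λ_x/μ_x → 0`, so those terms are bounded by their maximum.
At `x = 0` only the birth term `λ_0 e^a` remains.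
-/

open Real Filter

lemma finite_setOf_le_of_tendsto_zero {f : ℕ → ℝ} (hf : Tendsto f atTop (nhds 0))
    {ε : ℝ} (hε : 0 < ε) : {n | ε ≤ f n}.Finite := by
  rw [← Nat.cofinite_eq_atTop] at hf
  simpa only [not_lt] using eventually_cofinite.mp (hf.eventually (gt_mem_nhds hε))

lemma birthDeath_drift_le {lam mu a c t : ℝ} (hlam : 0 ≤ lam) (hmu : 0 < mu)
    (hsum : lam + mu ≤ 1) (hea : exp (-a) ≤ c / 4) :
    lam * exp (a * (t + 1)) + mu * exp (a * (t - 1)) ≤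
      exp (a * t) * (lam / mu * exp a + c / 4) := by
  have hbirth : lam ≤ lam / mu := le_div_self hlam hmu (by linarith)
  have hdeath : mu * exp (-a) ≤ c / 4 :=
    (mul_le_of_le_one_left (exp_pos _).le (by linarith)).trans hea
  have hsplit : lam * exp (a * (t + 1)) + mu * exp (a * (t - 1)) =
      exp (a * t) * (lam * exp a + mu * exp (-a)) := by
    rw [show a * (t + 1) = a * t + a by ring, show a * (t - 1) = a * t + -a by ring,
      exp_add, exp_add]
    ring
  rw [hsplit]
  gcongr

theorem stmt_10_general (lam mu : ℕ → ℝ) (c₁ a : ℝ)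
    (hmu0 : mu 0 = 0)
    (hlam : ∀ x, 0 < lam x) (hmu : ∀ x : ℕ, 1 ≤ x → 0 < mu x)
    (hsum1 : ∀ x, lam x + mu x ≤ 1)
    (hlittleo : Tendsto (fun x : ℕ => lam x / mu x) atTop (nhds 0))
    (hc₁pos : 0 < c₁)
    (hea : Real.exp (-a) ≤ c₁ / 4) :
    ∀ x : ℕ,
      lam x * Real.exp (a * ((x : ℝ) + 1)) + mu x * Real.exp (a * ((x : ℝ) - 1)) ≤
        c₁ / 2 * Real.exp (a * (x : ℝ)) +
          max (lam 0 * Real.exp a)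
            (sSup ((fun y : ℕ =>
                Real.exp (a * (y : ℝ)) * (lam y / mu y * Real.exp a + c₁ / 4)) ''
              {y : ℕ | 1 ≤ y ∧ c₁ / 2 ≤ lam y / mu y * Real.exp a + c₁ / 4})) := by
  set f : ℕ → ℝ := fun y => exp (a * y) * (lam y / mu y * exp a + c₁ / 4)
  set bad : Set ℕ := {y | 1 ≤ y ∧ c₁ / 2 ≤ lam y / mu y * exp a + c₁ / 4}
  have hbad : bad.Finite := by
    refine (finite_setOf_le_of_tendsto_zero hlittleo
      (by positivity : 0 < c₁ / 4 / exp a)).subset fun y hy => ?_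
    simp only [Set.mem_ofPred_eq, div_le_iff₀ (exp_pos a)]
    linarith [hy.2]
  intro x
  have hV : 0 ≤ c₁ / 2 * exp (a * x) := by positivity
  rcases Nat.eq_zero_or_pos x with rfl | hx
  · simp only [hmu0, Nat.cast_zero, zero_add, mul_one, zero_mul, add_zero]
    linarith [le_max_left (lam 0 * exp a) (sSup (f '' bad))]
  have hdrift : _ ≤ f x := birthDeath_drift_le (hlam x).le (hmu x hx) (hsum1 x) hea
  by_cases hxbad : x ∈ bad
  · have hfx : f x ≤ sSup (f '' bad) := le_csSup (hbad.image f).bddAbove ⟨x, hxbad, rfl⟩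
    linarith [le_max_right (lam 0 * exp a) (sSup (f '' bad))]
  · have hgood : lam x / mu x * exp a + c₁ / 4 < c₁ / 2 := not_le.mp fun h => hxbad ⟨hx, h⟩
    have hfx : f x ≤ exp (a * x) * (c₁ / 2) := mul_le_mul_of_nonneg_left hgood.le (exp_pos _).le
    linarith [le_max_left (lam 0 * exp a) (sSup (f '' bad)),
      mul_pos (hlam 0) (exp_pos a)]

/-- Lyapunov inequality (A2-ii) for the quasi-ergodic birth-death kernel
`R_x = λ_x δ_{x+1} + μ_x δ_{x-1}` with `V(x) = e^{a x}`, `e^{-a} ≤ c₁/4`: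
`R_x·V ≤ (c₁/2) V(x) + K` where `K` is the maximum over the finitely many bad
sites (the site `0` being handled separately). -/
theorem stmt_10 (lam mu : ℕ → ℝ) (c₁ a : ℝ)
    (hmu0 : mu 0 = 0) (hlam0 : 0 < lam 0)
    (hlam : ∀ x, 0 < lam x) (hmu : ∀ x : ℕ, 1 ≤ x → 0 < mu x)
    (hmuinf : ∃ d > (0 : ℝ), ∀ x : ℕ, 1 ≤ x → d ≤ mu x)
    (hmusup : ∃ Mb : ℝ, ∀ x, mu x ≤ Mb)
    (hsum1 : ∀ x, lam x + mu x ≤ 1)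
    (hlittleo : Tendsto (fun x : ℕ => lam x / mu x) atTop (nhds 0))
    (hc₁ : c₁ = ⨅ x : ℕ, (lam x + mu x)) (hc₁pos : 0 < c₁)
    (ha : 0 < a) (hea : Real.exp (-a) ≤ c₁ / 4) :
    ∀ x : ℕ,
      lam x * Real.exp (a * ((x : ℝ) + 1)) + mu x * Real.exp (a * ((x : ℝ) - 1)) ≤
        c₁ / 2 * Real.exp (a * (x : ℝ)) +
          max (lam 0 * Real.exp a)
            (sSup ((fun y : ℕ =>
                Real.exp (a * (y : ℝ)) * (lam y / mu y * Real.exp a + c₁ / 4)) ''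
              {y : ℕ | 1 ≤ y ∧ c₁ / 2 ≤ lam y / mu y * Real.exp a + c₁ / 4})) :=
  stmt_10_general lam mu c₁ a hmu0 hlam hmu hsum1 hlittleo hc₁pos hea
end

section
/- Let R be the kernel on ℕ with R_0 = -δ_0 + δ_1 and R_x = (1/(x+1)) δ_{x+1} + (x/(x+1))(δ_{x-1} + δ_1) - δ_x for x ≥ 1, let ν be as in the protected-nodes stationary distribution (ν(0) = (e-2)/(1+2e), ν(1) = 4(e-2)/(1+2e), ν(i) = (2(i+1)/(1+2e)) Σ_{j>i} 1/j! for i ≥ 2). Then the measure π̂ = νR satisfies π̂(0) = (e-2)/(1+2e), π̂(1) = (2e-4)/(1+2e), π̂(x) = (2/(1+2e)) Σ_{i≥x+1} 1/i! for x ≥ 2, and π̂(ℕ) = e/(1+2e). Consequently the normalization π = π̂/π̂(ℕ) satisfies π(0) = 1 - 2/e, π(1) = 2 - 4/e, and π(x) = (2/e) Σ_{i≥x+1} 1/i! for x ≥ 2. -/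
open Real Filter Topology

noncomputable def Tt14 (x : ℕ) : ℝ :=
  ∑' j : ℕ, (if x + 1 ≤ j then (1 : ℝ) / (Nat.factorial j) else 0)

lemma Tt14_def (x : ℕ) :
    Tt14 x = ∑' j : ℕ, (if x + 1 ≤ j then (1 : ℝ) / (Nat.factorial j) else 0) := rfl

lemma hasSum_exp14 : HasSum (fun j : ℕ => (1 : ℝ) / (Nat.factorial j)) (Real.exp 1) := by
  have h := NormedSpace.exp_series_hasSum_exp' (𝕂 := ℝ) (1 : ℝ)
  simp only [one_pow, smul_eq_mul, mul_one, ← one_div] at h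
  rw [show Real.exp 1 = NormedSpace.exp (1:ℝ) by rw [Real.exp_eq_exp_ℝ]]
  exact h

lemma summable_ind14 (x : ℕ) :
    Summable (fun j : ℕ => if x + 1 ≤ j then (1 : ℝ) / (Nat.factorial j) else 0) := by
  refine hasSum_exp14.summable.of_nonneg_of_le (fun j => ?_) (fun j => ?_)
  · split <;> positivity
  · split
    · exact le_rfl
    · positivity

lemma Tt14_nonneg (x : ℕ) : 0 ≤ Tt14 x :=
  tsum_nonneg fun j => by split <;> positivity

lemma Tt14_succ (x : ℕ) :
    Tt14 x = 1 / (Nat.factorial (x + 1)) + Tt14 (x + 1) := by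
  have hf : (fun j : ℕ => if x + 1 ≤ j then (1 : ℝ) / (Nat.factorial j) else 0)
      = fun j => (if j = x + 1 then (1 : ℝ) / (Nat.factorial (x + 1)) else 0)
        + (if x + 2 ≤ j then (1 : ℝ) / (Nat.factorial j) else 0) := by
    funext j
    by_cases h1 : j = x + 1
    · subst h1; rw [if_pos le_rfl, if_pos rfl, if_neg (by omega)]; ring
    · by_cases h2 : x + 1 ≤ j
      · rw [if_pos h2, if_neg h1, if_pos (by omega)]; ring
      · rw [if_neg h2, if_neg h1, if_neg (by omega)]; ring
  rw [Tt14_def, hf, Summable.tsum_add ((hasSum_ite_eq (x+1) ((1:ℝ)/(Nat.factorial (x+1)))).summable)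
    (summable_ind14 (x+1)), (hasSum_ite_eq (x+1) ((1:ℝ)/(Nat.factorial (x+1)))).tsum_eq,
    ← Tt14_def]

lemma Tt14_eq (x : ℕ) :
    Tt14 x = Real.exp 1 - ∑ j ∈ Finset.range (x + 1), (1 : ℝ) / (Nat.factorial j) := by
  have hc : Summable (fun j : ℕ => if x + 1 ≤ j then (0:ℝ) else 1 / (Nat.factorial j)) := by
    apply summable_of_ne_finset_zero (s := Finset.range (x + 1))
    intro j hj
    rw [if_pos (by simpa using hj)]
  have h2 : ∑' j : ℕ, (1:ℝ) / (Nat.factorial j)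
      = Tt14 x + ∑' j : ℕ, (if x + 1 ≤ j then (0:ℝ) else 1 / (Nat.factorial j)) := by
    rw [Tt14_def, ← Summable.tsum_add (summable_ind14 x) hc]
    exact tsum_congr fun j => by by_cases h : x + 1 ≤ j <;> simp [h]
  have h3 : ∑' j : ℕ, (if x + 1 ≤ j then (0:ℝ) else 1 / (Nat.factorial j))
      = ∑ j ∈ Finset.range (x + 1), (1:ℝ) / (Nat.factorial j) := by
    rw [tsum_eq_sum (s := Finset.range (x + 1)) (fun j hj => by rw [if_pos (by simpa using hj)])]
    exact Finset.sum_congr rfl fun j hj => by rw [if_neg (by simp at hj; omega)]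
  have h4 := hasSum_exp14.tsum_eq
  rw [h3] at h2
  linarith

lemma Tt14_one : Tt14 1 = Real.exp 1 - 2 := by
  rw [Tt14_eq]; norm_num [Finset.sum_range_succ, Nat.factorial]

lemma Tt14_two : Tt14 2 = Real.exp 1 - 5/2 := by
  rw [Tt14_eq]; norm_num [Finset.sum_range_succ, Nat.factorial]

lemma Tt14_three : Tt14 3 = Real.exp 1 - 8/3 := by
  rw [Tt14_eq]; norm_num [Finset.sum_range_succ, Nat.factorial]

lemma Tt14_tendsto : Tendsto Tt14 atTop (𝓝 0) := by
  have h := hasSum_exp14.tendsto_sum_nat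
  have h2 : Tendsto (fun n : ℕ => ∑ j ∈ Finset.range (n + 1), (1:ℝ) / (Nat.factorial j))
      atTop (𝓝 (Real.exp 1)) := h.comp (tendsto_add_atTop_nat 1)
  have h3 : Tendsto (fun n : ℕ =>
      Real.exp 1 - ∑ j ∈ Finset.range (n + 1), (1:ℝ) / (Nat.factorial j)) atTop
      (𝓝 (Real.exp 1 - Real.exp 1)) := tendsto_const_nhds.sub h2
  rw [sub_self] at h3
  exact h3.congr fun n => (Tt14_eq n).symm

lemma mul_Tt14_le (k : ℕ) : ((k : ℝ) + 1) * Tt14 (k + 1) ≤ Tt14 k := by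
  have hg : Summable (fun j : ℕ => if k + 2 ≤ j then (j : ℝ) / (Nat.factorial j) else 0) := by
    rw [← summable_nat_add_iff 1]
    apply Summable.congr (summable_ind14 k)
    intro m
    by_cases h : k + 1 ≤ m
    · rw [if_pos h, if_pos (by omega)]
      push_cast [Nat.factorial_succ]
      rw [eq_comm, div_eq_div_iff (by positivity) (by positivity)]
      ring
    · rw [if_neg h, if_neg (by omega)]
  have hval : ∑' j : ℕ, (if k + 2 ≤ j then (j : ℝ) / (Nat.factorial j) else 0) = Tt14 k := by
    rw [Summable.tsum_eq_zero_add hg, if_neg (by omega), zero_add, Tt14_def]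
    refine tsum_congr fun b => ?_
    by_cases h : k + 1 ≤ b
    · rw [if_pos (by omega), if_pos h]
      push_cast [Nat.factorial_succ]
      rw [div_eq_div_iff (by positivity) (by positivity)]
      ring
    · rw [if_neg (by omega), if_neg h]
  have hle : ((k : ℝ) + 1) * Tt14 (k + 1)
      = ∑' j : ℕ, ((k : ℝ) + 1) * (if k + 2 ≤ j then (1:ℝ) / (Nat.factorial j) else 0) := by
    rw [tsum_mul_left, Tt14_def]
  rw [hle, ← hval]
  refine Summable.tsum_le_tsum (fun j => ?_) ((summable_ind14 (k+1)).mul_left _) hg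
  by_cases h : k + 2 ≤ j
  · rw [if_pos h, if_pos h]
    rw [mul_one_div]
    have hj : ((k : ℝ) + 1) ≤ (j : ℝ) := by exact_mod_cast (by omega : k + 1 ≤ j)
    gcongr
  · rw [if_neg h, if_neg h, mul_zero]

lemma lin_tendsto14 : Tendsto (fun n : ℕ => ((n : ℝ) + 1) * Tt14 (n + 1)) atTop (𝓝 0) :=
  squeeze_zero (fun n => mul_nonneg (by positivity) (Tt14_nonneg _))
    (fun n => mul_Tt14_le n) Tt14_tendsto

lemma quad_tendsto14 :
    Tendsto (fun n : ℕ => ((n : ℝ) + 1) * (((n : ℝ) + 2) * Tt14 (n + 2))) atTop (𝓝 0) := by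
  refine squeeze_zero (fun n => ?_) (fun n => ?_) Tt14_tendsto
  · have := Tt14_nonneg (n + 2); positivity
  · calc ((n : ℝ) + 1) * (((n : ℝ) + 2) * Tt14 (n + 2))
        ≤ ((n : ℝ) + 1) * Tt14 (n + 1) := by
          refine mul_le_mul_of_nonneg_left ?_ (by positivity)
          have h := mul_Tt14_le (n + 1)
          push_cast at h
          convert h using 2
          · rfl
          · ring
      _ ≤ Tt14 n := mul_Tt14_le n

lemma hasSum_telescope14 (F : ℕ → ℝ) (hd : ∀ n, F (n + 1) ≤ F n)
    (h0 : Tendsto F atTop (𝓝 0)) : HasSum (fun n => F n - F (n + 1)) (F 0) := by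
  have hnn : ∀ n, 0 ≤ F n - F (n + 1) := fun n => sub_nonneg.2 (hd n)
  rw [hasSum_iff_tendsto_nat_of_nonneg hnn]
  have hps : ∀ n : ℕ, ∑ i ∈ Finset.range n, (F i - F (i + 1)) = F 0 - F n :=
    fun n => Finset.sum_range_sub' F n
  have : Tendsto (fun n : ℕ => F 0 - F n) atTop (𝓝 (F 0 - 0)) := tendsto_const_nhds.sub h0
  rw [sub_zero] at this
  exact Tendsto.congr (fun n => (hps n).symm) this

lemma fact_succ14 (m : ℕ) : ((m : ℝ) + 1) * (1 / (Nat.factorial (m + 1)))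
    = 1 / (Nat.factorial m) := by
  push_cast [Nat.factorial_succ]
  rw [mul_one_div, div_eq_div_iff (by positivity) (by positivity)]
  ring

lemma hasSum_tailT14 : HasSum (fun n : ℕ => Tt14 (n + 2)) (Tt14 1 - 2 * Tt14 2) := by
  have key : ∀ n : ℕ, (Tt14 (n + 1) - ((n : ℝ) + 2) * Tt14 (n + 2))
      - (Tt14 (n + 2) - ((n : ℝ) + 3) * Tt14 (n + 3)) = Tt14 (n + 2) := by
    intro n
    have e1 := Tt14_succ (n + 1)
    have e2 := Tt14_succ (n + 2)
    have e3 := fact_succ14 (n + 2)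
    push_cast at e3
    linear_combination e1 - ((n : ℝ) + 3) * e2 - e3
  have hd : ∀ n : ℕ, (fun n : ℕ => Tt14 (n + 1) - ((n : ℝ) + 2) * Tt14 (n + 2)) (n + 1)
      ≤ (fun n : ℕ => Tt14 (n + 1) - ((n : ℝ) + 2) * Tt14 (n + 2)) n := by
    intro n
    have h := key n
    have h2 := Tt14_nonneg (n + 2)
    simp only [] at h ⊢
    push_cast
    nlinarith [h, h2]
  have h0 : Tendsto (fun n : ℕ => Tt14 (n + 1) - ((n : ℝ) + 2) * Tt14 (n + 2)) atTop (𝓝 0) := by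
    have ha : Tendsto (fun n : ℕ => Tt14 (n + 1)) atTop (𝓝 0) :=
      Tt14_tendsto.comp (tendsto_add_atTop_nat 1)
    have hb : Tendsto (fun n : ℕ => ((n : ℝ) + 2) * Tt14 (n + 2)) atTop (𝓝 0) := by
      have := lin_tendsto14.comp (tendsto_add_atTop_nat 1)
      refine this.congr fun n => ?_
      simp only [Function.comp]
      push_cast
      ring_nf
    simpa using ha.sub hb
  have h := hasSum_telescope14 _ hd h0
  simp only [Nat.cast_zero, zero_add] at h
  refine h.congr_fun fun n => ?_
  have := (key n).symm
  push_cast at this ⊢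
  convert this using 3 <;> push_cast <;> ring


lemma hasSum_tail2_14 :
    HasSum (fun n : ℕ => ((n : ℝ) + 3) * Tt14 (n + 3)) (Tt14 1 / 2 - 3 * Tt14 3) := by
  set F : ℕ → ℝ := fun n => Tt14 (n + 1) / 2 - ((n : ℝ) + 3) * ((n : ℝ) + 2) / 2 * Tt14 (n + 3)
    with hF
  have key : ∀ n : ℕ, F n - F (n + 1) = ((n : ℝ) + 3) * Tt14 (n + 3) := by
    intro n
    have e1 := Tt14_succ (n + 1)
    have e2' := Tt14_succ (n + 3)
    have e3 := fact_succ14 (n + 2)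
    have e3' := fact_succ14 (n + 3)
    push_cast at e3 e3'
    simp only [hF]
    push_cast
    ring_nf
    ring_nf at e1 e2' e3 e3'
    nlinarith [e1, e2', e3, e3', sq_nonneg ((n:ℝ))]
  have hd : ∀ n : ℕ, F (n + 1) ≤ F n := by
    intro n
    have h := key n
    have h2 := Tt14_nonneg (n + 3)
    nlinarith [h, h2]
  have h0 : Tendsto F atTop (𝓝 0) := by
    have ha : Tendsto (fun n : ℕ => Tt14 (n + 1) / 2) atTop (𝓝 0) := by
      simpa using (Tt14_tendsto.comp (tendsto_add_atTop_nat 1)).div_const 2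
    have hb : Tendsto (fun n : ℕ => ((n : ℝ) + 3) * ((n : ℝ) + 2) / 2 * Tt14 (n + 3)) atTop
        (𝓝 0) := by
      have h := (quad_tendsto14.comp (tendsto_add_atTop_nat 1)).div_const 2
      simp only [Function.comp] at h
      have h2 : Tendsto (fun n : ℕ =>
          ((n : ℝ) + 2) * (((n : ℝ) + 3) * Tt14 (n + 3)) / 2) atTop (𝓝 (0 / 2)) := by
        refine h.congr fun n => ?_
        push_cast
        ring_nf
      rw [zero_div] at h2
      refine h2.congr fun n => by ring
    simpa [hF] using ha.sub hb
  have h := hasSum_telescope14 F hd h0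
  have hF0 : F 0 = Tt14 1 / 2 - 3 * Tt14 3 := by norm_num [hF]
  rw [hF0] at h
  exact h.congr_fun fun n => (key n).symm
set_option maxHeartbeats 1600000 in
/-- Computation of `π̂ = νR` for the protected-nodes replacement kernel
`R_0 = -δ_0 + δ_1`, `R_x = (1/(x+1)) δ_{x+1} + (x/(x+1))(δ_{x-1} + δ_1) - δ_x`
(`x ≥ 1`), where `ν` is the protected-nodes stationary distribution; and of its
normalization `π = π̂ / π̂(ℕ)`. -/
theorem stmt_14 (ν : ℕ → ℝ)
    (hν0 : ν 0 = (Real.exp 1 - 2) / (1 + 2 * Real.exp 1))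
    (hν1 : ν 1 = 4 * (Real.exp 1 - 2) / (1 + 2 * Real.exp 1))
    (hνi : ∀ i : ℕ, 2 ≤ i →
      ν i = 2 * ((i : ℝ) + 1) / (1 + 2 * Real.exp 1) *
        ∑' j : ℕ, (if i + 1 ≤ j then (1 : ℝ) / (Nat.factorial j) else 0))
    (R : ℕ → ℕ → ℝ)
    (hR0 : ∀ y : ℕ, R 0 y = -(if y = 0 then 1 else 0) + (if y = 1 then 1 else 0))
    (hRx : ∀ x y : ℕ, 1 ≤ x →
      R x y = (1 / ((x : ℝ) + 1)) * (if y = x + 1 then 1 else 0)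
        + ((x : ℝ) / ((x : ℝ) + 1)) *
            ((if y = x - 1 then 1 else 0) + (if y = 1 then 1 else 0))
        - (if y = x then 1 else 0))
    (piHat : ℕ → ℝ) (hpiHat : ∀ y : ℕ, piHat y = ∑' x : ℕ, ν x * R x y)
    (pi : ℕ → ℝ) (hpi : ∀ y : ℕ, pi y = piHat y / (∑' z : ℕ, piHat z)) :
    piHat 0 = (Real.exp 1 - 2) / (1 + 2 * Real.exp 1) ∧
    piHat 1 = (2 * Real.exp 1 - 4) / (1 + 2 * Real.exp 1) ∧
    (∀ x : ℕ, 2 ≤ x →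
      piHat x = 2 / (1 + 2 * Real.exp 1) *
        ∑' i : ℕ, (if x + 1 ≤ i then (1 : ℝ) / (Nat.factorial i) else 0)) ∧
    (∑' z : ℕ, piHat z) = Real.exp 1 / (1 + 2 * Real.exp 1) ∧
    pi 0 = 1 - 2 / Real.exp 1 ∧
    pi 1 = 2 - 4 / Real.exp 1 ∧
    (∀ x : ℕ, 2 ≤ x →
      pi x = 2 / Real.exp 1 *
        ∑' i : ℕ, (if x + 1 ≤ i then (1 : ℝ) / (Nat.factorial i) else 0)) := by
  have hepos := Real.exp_pos 1
  have hc : (1 : ℝ) + 2 * Real.exp 1 ≠ 0 := by positivity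
  have hν' : ∀ i : ℕ, 2 ≤ i →
      ν i = 2 * ((i : ℝ) + 1) / (1 + 2 * Real.exp 1) * Tt14 i := by
    intro i hi
    rw [hνi i hi, ← Tt14_def]
  -- piHat 0
  have h0 : piHat 0 = (Real.exp 1 - 2) / (1 + 2 * Real.exp 1) := by
    have hside : ∀ x ∉ ({0, 1} : Finset ℕ), ν x * R x 0 = 0 := by
      intro x hx
      simp only [Finset.mem_insert, Finset.mem_singleton] at hx
      push_neg at hx
      obtain ⟨hx0, hx1⟩ := hx
      rw [hRx x 0 (by omega), if_neg (by omega), if_neg (by omega), if_neg (by omega),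
        if_neg (by omega)]
      ring
    rw [hpiHat 0, tsum_eq_sum hside, Finset.sum_insert (by norm_num), Finset.sum_singleton,
      hR0 0, hRx 1 0 le_rfl, hν0, hν1]
    norm_num
    ring
  -- piHat x for x ≥ 2 (in Tt14 form)
  have h3 : ∀ x : ℕ, 2 ≤ x → piHat x = 2 / (1 + 2 * Real.exp 1) * Tt14 x := by
    intro x hx
    rcases (show x = 2 ∨ ∃ n, x = n + 3 from by
      rcases Nat.lt_or_ge x 3 with h | h
      · exact Or.inl (by omega)
      · exact Or.inr ⟨x - 3, by omega⟩) with rfl | ⟨n, rfl⟩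
    · have hside : ∀ x ∉ ({1, 2, 3} : Finset ℕ), ν x * R x 2 = 0 := by
        intro x hx
        simp only [Finset.mem_insert, Finset.mem_singleton] at hx
        push_neg at hx
        obtain ⟨ha, hb, hcc⟩ := hx
        rcases Nat.eq_zero_or_pos x with rfl | hpos
        · rw [hR0 2, if_neg (by omega), if_neg (by omega)]; ring
        · rw [hRx x 2 hpos, if_neg (by omega), if_neg (by omega), if_neg (by omega),
            if_neg (by omega)]
          ring
      rw [hpiHat 2, tsum_eq_sum hside, Finset.sum_insert (by norm_num),
        Finset.sum_insert (by norm_num), Finset.sum_singleton,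
        hRx 1 2 le_rfl, hRx 2 2 (by norm_num), hRx 3 2 (by norm_num),
        hν1, hν' 2 le_rfl, hν' 3 (by norm_num), Tt14_two, Tt14_three]
      norm_num
      field_simp
      ring
    · have hside : ∀ x ∉ ({n + 2, n + 3, n + 4} : Finset ℕ), ν x * R x (n + 3) = 0 := by
        intro x hx
        simp only [Finset.mem_insert, Finset.mem_singleton] at hx
        push_neg at hx
        obtain ⟨ha, hb, hcc⟩ := hx
        rcases Nat.eq_zero_or_pos x with rfl | hpos
        · rw [hR0 (n + 3), if_neg (by omega), if_neg (by omega)]; ring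
        · rw [hRx x (n + 3) hpos, if_neg (by omega), if_neg (by omega), if_neg (by omega),
            if_neg (by omega)]
          ring
      have t1 : ν (n + 2) * R (n + 2) (n + 3)
          = 2 / (1 + 2 * Real.exp 1) * Tt14 (n + 2) := by
        rw [hν' (n + 2) (by omega), hRx (n + 2) (n + 3) (by omega), if_pos rfl,
          if_neg (by omega), if_neg (by omega), if_neg (by omega)]
        have hn : ((n : ℝ) + 2) + 1 ≠ 0 := by positivity
        push_cast
        field_simp
        ring
      have t2 : ν (n + 3) * R (n + 3) (n + 3)
          = -(2 * ((n : ℝ) + 4) / (1 + 2 * Real.exp 1) * Tt14 (n + 3)) := by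
        rw [hν' (n + 3) (by omega), hRx (n + 3) (n + 3) (by omega), if_neg (by omega),
          if_neg (by omega), if_neg (by omega), if_pos rfl]
        push_cast
        ring
      have t3 : ν (n + 4) * R (n + 4) (n + 3)
          = 2 * ((n : ℝ) + 4) / (1 + 2 * Real.exp 1) * Tt14 (n + 4) := by
        rw [hν' (n + 4) (by omega), hRx (n + 4) (n + 3) (by omega), if_neg (by omega),
          if_pos (by omega), if_neg (by omega), if_neg (by omega)]
        have hn : ((n : ℝ) + 4) + 1 ≠ 0 := by positivity
        push_cast
        field_simp
        ring
      rw [hpiHat (n + 3), tsum_eq_sum hside,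
        Finset.sum_insert (by simp only [Finset.mem_insert, Finset.mem_singleton]; omega),
        Finset.sum_insert (by simp only [Finset.mem_singleton]; omega),
        Finset.sum_singleton, t1, t2, t3]
      have e2 : Tt14 (n + 2) = 1 / (Nat.factorial (n + 3)) + Tt14 (n + 3) := Tt14_succ (n + 2)
      have e2' : Tt14 (n + 3) = 1 / (Nat.factorial (n + 4)) + Tt14 (n + 4) := Tt14_succ (n + 3)
      have e3' : ((n : ℝ) + 4) * (1 / (Nat.factorial (n + 4))) = 1 / (Nat.factorial (n + 3)) := by
        have := fact_succ14 (n + 3)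
        push_cast at this ⊢
        convert this using 2
        push_cast
        ring
      push_cast at e2 e2' e3' ⊢
      linear_combination (2 / (1 + 2 * Real.exp 1)) * e2
        - (2 * ((n : ℝ) + 4) / (1 + 2 * Real.exp 1)) * e2'
        - (2 / (1 + 2 * Real.exp 1)) * e3'
  -- piHat 1
  have h1 : piHat 1 = (2 * Real.exp 1 - 4) / (1 + 2 * Real.exp 1) := by
    have hterm : ∀ n : ℕ, ν (n + 3) * R (n + 3) 1
        = 2 / (1 + 2 * Real.exp 1) * (((n : ℝ) + 3) * Tt14 (n + 3)) := by
      intro n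
      rw [hν' (n + 3) (by omega), hRx (n + 3) 1 (by omega), if_neg (by omega),
        if_neg (by omega), if_pos rfl, if_neg (by omega)]
      have hn : ((n : ℝ) + 3) + 1 ≠ 0 := by positivity
      push_cast
      field_simp
      ring
    have hs : HasSum (fun n : ℕ => ν (n + 3) * R (n + 3) 1)
        (2 / (1 + 2 * Real.exp 1) * (Tt14 1 / 2 - 3 * Tt14 3)) :=
      (hasSum_tail2_14.mul_left (2 / (1 + 2 * Real.exp 1))).congr_fun fun n => hterm n
    have hsum : Summable (fun x : ℕ => ν x * R x 1) := by
      rw [← summable_nat_add_iff 3]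
      exact hs.summable
    have s1 : Summable (fun n : ℕ => ν (n + 1) * R (n + 1) 1) :=
      (summable_nat_add_iff 1).2 hsum
    have s2 : Summable (fun n : ℕ => ν (n + 2) * R (n + 2) 1) :=
      (summable_nat_add_iff 2).2 hsum
    have E1 : ∑' x : ℕ, ν x * R x 1 = ν 0 * R 0 1 + ∑' n : ℕ, ν (n + 1) * R (n + 1) 1 :=
      Summable.tsum_eq_zero_add hsum
    have E2 : ∑' n : ℕ, ν (n + 1) * R (n + 1) 1
        = ν 1 * R 1 1 + ∑' n : ℕ, ν (n + 2) * R (n + 2) 1 := Summable.tsum_eq_zero_add s1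
    have E3 : ∑' n : ℕ, ν (n + 2) * R (n + 2) 1
        = ν 2 * R 2 1 + ∑' n : ℕ, ν (n + 3) * R (n + 3) 1 := Summable.tsum_eq_zero_add s2
    rw [hpiHat 1, E1, E2, E3, hs.tsum_eq, hR0 1, hRx 1 1 le_rfl, hRx 2 1 (by norm_num),
      hν0, hν1, hν' 2 le_rfl, Tt14_one, Tt14_two, Tt14_three]
    norm_num
    field_simp
    ring
  -- total mass
  have hs2 : HasSum (fun n : ℕ => piHat (n + 2))
      (2 / (1 + 2 * Real.exp 1) * (Tt14 1 - 2 * Tt14 2)) :=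
    (hasSum_tailT14.mul_left (2 / (1 + 2 * Real.exp 1))).congr_fun
      fun n => h3 (n + 2) (by omega)
  have hsumP : Summable piHat := by
    rw [← summable_nat_add_iff 2]
    exact hs2.summable
  have htot : (∑' z : ℕ, piHat z) = Real.exp 1 / (1 + 2 * Real.exp 1) := by
    have E1 : ∑' z : ℕ, piHat z = piHat 0 + ∑' n : ℕ, piHat (n + 1) := Summable.tsum_eq_zero_add hsumP
    have E2 : ∑' n : ℕ, piHat (n + 1) = piHat 1 + ∑' n : ℕ, piHat (n + 2) :=
      Summable.tsum_eq_zero_add ((summable_nat_add_iff 1).2 hsumP)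
    rw [E1, E2, hs2.tsum_eq, h0, h1, Tt14_one, Tt14_two]
    field_simp
    ring
  refine ⟨h0, h1, fun x hx => by rw [h3 x hx, ← Tt14_def], htot, ?_, ?_, ?_⟩
  · rw [hpi 0, h0, htot]
    field_simp
  · rw [hpi 1, h1, htot]
    field_simp
  · intro x hx
    rw [hpi x, h3 x hx, htot, ← Tt14_def]
    field_simp
end

section
/- Let b : ℝᵈ → ℝᵈ be continuous with limsup_{|x|→∞} ⟨b(x), x⟩/|x| < -(3/2)‖κ‖_∞^{1/2} for a bounded continuous κ : ℝᵈ → [0,∞), and let V(x) = exp(‖κ‖_∞^{1/2} |x|). Then the generator L f = (1/2)Δf + ⟨b, ∇f⟩ satisfies: there exist ε > 0 and C ≥ 0 such that L V(x) ≤ -(‖κ‖_∞ + ε) V(x) + C for all x ∈ ℝᵈ (with V interpreted via a smooth modification near 0 if necessary, or the inequality required only for |x| bounded away from 0 with the remaining region absorbed in C). -/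
open Real Filter

/-!
With `a = √Knorm`, the bracket multiplying `V(x) = exp (a ‖x‖)` is at most
`a² / 2 + a (d - 1) / (2 ‖x‖) + a L` once `‖x‖ ≥ R₀`. The drift condition `a L < -(3/2) a²` leaves
a margin `δ = -(3/2 a² + a L) > 0` below `-a²`, and the curvature term `a (d - 1) / ‖x‖` falls below
`δ` for large `‖x‖`; half the margin serves as `ε`, and `C = 0` suffices. When `Knorm = 0` the bracket
vanishes and any `ε = C > 0` works.
-/

lemma lyapunov_bracket_le {K a t s L δ : ℝ} (ha : 0 ≤ a) (hs : s ≤ L)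
    (hmargin : 3 / 2 * K + a * L + δ ≤ 0) (ht : t ≤ δ) :
    (1 / 2) * (K + t) + a * s ≤ -(K + δ / 2) := by
  have has : a * s ≤ a * L := mul_le_mul_of_nonneg_left hs ha
  linarith

theorem stmt_18_general (d : ℕ)
    (b : EuclideanSpace ℝ (Fin d) → EuclideanSpace ℝ (Fin d))
    (Knorm : ℝ)
    (hKnonneg : 0 ≤ Knorm)
    (hdrift : ∃ L : ℝ, L < -(3 / 2) * Real.sqrt Knorm ∧
      ∃ R₀ : ℝ, ∀ x, R₀ ≤ ‖x‖ → (inner ℝ (b x) x : ℝ) / ‖x‖ ≤ L) :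
    ∃ ε > (0 : ℝ), ∃ C ≥ (0 : ℝ), ∃ r > (0 : ℝ),
      ∀ x : EuclideanSpace ℝ (Fin d), r ≤ ‖x‖ →
        Real.exp (Real.sqrt Knorm * ‖x‖) *
            ((1 / 2) * (Knorm + Real.sqrt Knorm * ((d : ℝ) - 1) / ‖x‖)
              + Real.sqrt Knorm * ((inner ℝ (b x) x : ℝ) / ‖x‖))
          ≤ -(Knorm + ε) * Real.exp (Real.sqrt Knorm * ‖x‖) + C := by
  obtain ⟨L, hL, R₀, hR₀⟩ := hdrift
  rcases hKnonneg.eq_or_lt with hK0 | hKpos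
  · refine ⟨1, one_pos, 1, zero_le_one, 1, one_pos, fun x _ => ?_⟩
    simp [← hK0]
  set a := √Knorm
  have ha : 0 ≤ a := sqrt_nonneg _
  have hK : a ^ 2 = Knorm := sq_sqrt hKnonneg
  obtain ⟨δ, hδ, hmargin⟩ : ∃ δ > 0, 3 / 2 * Knorm + a * L + δ ≤ 0 :=
    ⟨-(3 / 2 * Knorm + a * L), by nlinarith [mul_lt_mul_of_pos_left hL (sqrt_pos.mpr hKpos)],
      by linarith⟩
  have hcurv : ∀ᶠ ρ : ℝ in atTop, a * ((d : ℝ) - 1) / ρ ≤ δ :=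
    (tendsto_id.const_div_atTop _).eventually (ge_mem_nhds hδ)
  obtain ⟨r, hr⟩ := eventually_atTop.mp
    ((eventually_gt_atTop 0).and ((eventually_ge_atTop R₀).and hcurv))
  refine ⟨δ / 2, half_pos hδ, 0, le_rfl, r, (hr r le_rfl).1, fun x hx => ?_⟩
  obtain ⟨-, hxR₀, hxcurv⟩ := hr ‖x‖ hx
  have hbracket := lyapunov_bracket_le ha (hR₀ x hxR₀) hmargin hxcurv
  linarith [mul_le_mul_of_nonneg_left hbracket (exp_pos (a * ‖x‖)).le]

/-- Lyapunov property for the diffusion generator `L = (1/2)Δ + ⟨b, ∇⟩` with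
`V(x) = exp(‖κ‖_∞^{1/2} |x|)` under the drift condition
`limsup_{|x|→∞} ⟨b(x),x⟩/|x| < -(3/2)‖κ‖_∞^{1/2}`: there exist `ε > 0`, `C ≥ 0`
and `r > 0` such that for all `x` with `|x| ≥ r`,
`L V(x) = V(x)·[(1/2)(a² + a(d-1)/|x|) + a⟨b(x),x⟩/|x|] ≤ -(‖κ‖_∞+ε)V(x) + C`,
where `a = ‖κ‖_∞^{1/2}`. -/
theorem stmt_18 (d : ℕ)
    (b : EuclideanSpace ℝ (Fin d) → EuclideanSpace ℝ (Fin d)) (hb : Continuous b)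
    (κ : EuclideanSpace ℝ (Fin d) → ℝ) (hκcont : Continuous κ)
    (hκ0 : ∀ x, 0 ≤ κ x) (Knorm : ℝ) (hKnorm : Knorm = ⨆ x, κ x)
    (hκbdd : ∀ x, κ x ≤ Knorm) (hKnonneg : 0 ≤ Knorm)
    (hdrift : ∃ L : ℝ, L < -(3 / 2) * Real.sqrt Knorm ∧
      ∃ R₀ : ℝ, ∀ x, R₀ ≤ ‖x‖ → (inner ℝ (b x) x : ℝ) / ‖x‖ ≤ L) :
    ∃ ε > (0 : ℝ), ∃ C ≥ (0 : ℝ), ∃ r > (0 : ℝ),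
      ∀ x : EuclideanSpace ℝ (Fin d), r ≤ ‖x‖ →
        Real.exp (Real.sqrt Knorm * ‖x‖) *
            ((1 / 2) * (Knorm + Real.sqrt Knorm * ((d : ℝ) - 1) / ‖x‖)
              + Real.sqrt Knorm * ((inner ℝ (b x) x : ℝ) / ‖x‖))
          ≤ -(Knorm + ε) * Real.exp (Real.sqrt Knorm * ‖x‖) + C :=
  stmt_18_general d b Knorm hKnonneg hdrift
end
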